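/- There exists a universal constant c > 0 such that the following holds. Let G = (V,E) be a finite simple graph on n ≥ 2 vertices, let α > 0 and let m, M ≥ 1. Then at least one of the following two alternatives holds: (i) there exist pairwise disjoint subsets H₁,…,H_t ⊆ V with |H_j| ≥ m for every j, with Σ_j |H_j| ≥ M, and such that every induced subgraph G[H_j] is an α-expander; or (ii) there exists a subset S ⊆ V with |S| ≤ M + 2c·log(n)·α·n such that V∖S can be partitioned into sets {A_i}_i with |A_i| < 3m for every i and with no edge of G joining two different parts A_i, A_j (i ≠ j). -/

import Mathlib

open scoped Classical

/-- A Pauli operator on `n` qubits, modulo phase, in symplectic representation. -/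
abbrev PauliVec (n : ℕ) : Type := (Fin n → ZMod 2) × (Fin n → ZMod 2)

/-- The support of a Pauli operator: qubits where it acts nontrivially. -/
def PauliSupport {n : ℕ} (v : PauliVec n) : Finset (Fin n) :=
  Finset.univ.filter fun i => v.1 i ≠ 0 ∨ v.2 i ≠ 0

/-- The weight of a Pauli operator. -/
def PauliWeight {n : ℕ} (v : PauliVec n) : ℕ := (PauliSupport v).card

/-- The symplectic form; it vanishes iff the corresponding Paulis commute. -/
def sympForm {n : ℕ} (v w : PauliVec n) : ZMod 2 :=
  ∑ i, (v.1 i * w.2 i + v.2 i * w.1 i)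

lemma sympForm_add_left {n : ℕ} (a b w : PauliVec n) :
    sympForm (a + b) w = sympForm a w + sympForm b w := by
  simp only [sympForm, Prod.fst_add, Prod.snd_add, Pi.add_apply]
  rw [← Finset.sum_add_distrib]
  exact Finset.sum_congr rfl fun i _ => by ring

lemma sympForm_smul_left {n : ℕ} (c : ZMod 2) (a w : PauliVec n) :
    sympForm (c • a) w = c * sympForm a w := by
  simp only [sympForm, Prod.smul_fst, Prod.smul_snd, Pi.smul_apply, smul_eq_mul,
    Finset.mul_sum]
  exact Finset.sum_congr rfl fun i _ => by ring

/-- The symplectic orthogonal complement of a subspace of Pauli operators. -/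
def sympCompl {n : ℕ} (W : Submodule (ZMod 2) (PauliVec n)) :
    Submodule (ZMod 2) (PauliVec n) where
  carrier := {v | ∀ w ∈ W, sympForm v w = 0}
  zero_mem' := by
    intro w _
    simp [sympForm]
  add_mem' := by
    intro a b ha hb w hw
    rw [sympForm_add_left, ha w hw, hb w hw, add_zero]
  smul_mem' := by
    intro c v hv w hw
    rw [sympForm_smul_left, hv w hw, mul_zero]

/-- The gauge group (as an `F₂`-subspace) spanned by a family of gauge checks. -/
def gaugeGroup {N r : ℕ} (g : Fin r → PauliVec N) : Submodule (ZMod 2) (PauliVec N) :=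
  Submodule.span (ZMod 2) (Set.range g)

/-- The number of logical qubits of the subsystem code with gauge checks `g`:
`k = (dim G^⊥ − dim (G ∩ G^⊥))/2`. -/
noncomputable def subsysLogicalQubits {N r : ℕ} (g : Fin r → PauliVec N) : ℕ :=
  (Module.finrank (ZMod 2) ↥(sympCompl (gaugeGroup g)) -
    Module.finrank (ZMod 2) ↥(gaugeGroup g ⊓ sympCompl (gaugeGroup g))) / 2

/-- The dressed distance of the subsystem code with gauge checks `g`:
`d = min {|v| : v ∈ (G + G^⊥) ∖ G}`. -/
noncomputable def dressedDistance {N r : ℕ} (g : Fin r → PauliVec N) : ℕ :=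
  sInf {w : ℕ | ∃ v : PauliVec N,
    v ∈ (gaugeGroup g ⊔ sympCompl (gaugeGroup g) : Submodule (ZMod 2) (PauliVec N)) ∧
    v ∉ gaugeGroup g ∧ PauliWeight v = w}

/-- The stabilizer group (as an `F₂`-subspace) spanned by a family of checks. -/
def stabGroup {n m : ℕ} (s : Fin m → PauliVec n) : Submodule (ZMod 2) (PauliVec n) :=
  Submodule.span (ZMod 2) (Set.range s)

/-- The number of logical qubits of a stabilizer code: `k = n − dim S`. -/
noncomputable def stabLogicalQubits {n m : ℕ} (s : Fin m → PauliVec n) : ℕ :=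
  n - Module.finrank (ZMod 2) ↥(stabGroup s)

/-- The distance of a stabilizer code: `d = min {|v| : v ∈ S^⊥ ∖ S}`. -/
noncomputable def stabDistance {n m : ℕ} (s : Fin m → PauliVec n) : ℕ :=
  sInf {w : ℕ | ∃ v : PauliVec n,
    v ∈ sympCompl (stabGroup s) ∧ v ∉ stabGroup s ∧ PauliWeight v = w}

/-- The degree of a qubit: the number of checks whose support contains it. -/
noncomputable def checkDegree {n m : ℕ} (s : Fin m → PauliVec n) (q : Fin n) : ℕ :=
  (Finset.univ.filter fun i => q ∈ PauliSupport (s i)).card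

/-- The degree of a qubit in a subsystem code, not counting single-qubit gauge checks:
the number of gauge checks of weight at least `2` whose support contains it. -/
noncomputable def gaugeDegree {N r : ℕ} (g : Fin r → PauliVec N) (q : Fin N) : ℕ :=
  (Finset.univ.filter fun i => q ∈ PauliSupport (g i) ∧ 2 ≤ PauliWeight (g i)).card

/-- The code with gauge checks `g` is local in `D` dimensions with constant `C`:
there is a layout map `π` to `ℤ^D` with at most `C` qubits per lattice point such
that the support of every gauge check has `ℓ∞`-diameter at most `C`. -/
def LocalInDim {N r : ℕ} (g : Fin r → PauliVec N) (D : ℕ) (C : ℕ) : Prop :=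
  ∃ π : Fin N → (Fin D → ℤ),
    (∀ p : Fin D → ℤ, (Finset.univ.filter fun q => π q = p).card ≤ C) ∧
    (∀ i : Fin r, ∀ q ∈ PauliSupport (g i), ∀ q' ∈ PauliSupport (g i), ∀ j : Fin D,
      |π q j - π q' j| ≤ (C : ℤ))

/-- The number of edges of `G` with one endpoint in `S` and the other outside `S`. -/
noncomputable def cutEdges {V : Type} [Fintype V] (G : SimpleGraph V) (S : Finset V) : ℕ :=
  (Finset.univ.filter fun p : V × V => p.1 ∈ S ∧ p.2 ∉ S ∧ G.Adj p.1 p.2).card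

/-- `G` is an `α`-expander: every cut `(S, V∖S)` has at least `α·min(|S|,|V∖S|)` edges. -/
def IsExpander {V : Type} [Fintype V] (G : SimpleGraph V) (α : ℝ) : Prop :=
  ∀ S : Finset V, S.Nonempty → S ≠ Finset.univ →
    α * min (S.card : ℝ) ((Sᶜ : Finset V).card : ℝ) ≤ (cutEdges G S : ℝ)

/-- The code with gauge checks `g` is local on the graph `G` with constant `C`:
there is a map `ρ` from qubits to vertices with at most `C` qubits per vertex, such
that every gauge check is supported on qubits mapped to a single vertex or to two
adjacent vertices. -/
def LocalOnGraph {V : Type} [Fintype V] (G : SimpleGraph V) {N r : ℕ}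
    (g : Fin r → PauliVec N) (C : ℕ) : Prop :=
  ∃ ρ : Fin N → V,
    (∀ v : V, (Finset.univ.filter fun q => ρ q = v).card ≤ C) ∧
    (∀ i : Fin r, ∃ u v : V, (u = v ∨ G.Adj u v) ∧
      ∀ q ∈ PauliSupport (g i), ρ q = u ∨ ρ q = v)

/-!
Remove disjoint `α`-expanders on at least `m` vertices greedily for as long as possible. If they
cover at least `M` vertices we are in case (i). Otherwise the remaining set `U` contains no such
expander, so it can be split recursively along sparse cuts until all pieces have fewer than `m`
vertices; deleting one endpoint of every cut edge separates the pieces. A cut of a set of size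
`a + b` into sides of sizes `a` and `b` has fewer than `α min(a, b)` edges, and
`a log₂ a + b log₂ b + min(a, b) ≤ (a + b) log₂ (a + b)`, so at most `α |U| log₂ |U|` vertices are
deleted in total.
-/

open Finset Real

lemma mul_logb_add_mul_logb_add_le {a b : ℝ} (ha : 0 < a) (hab : a ≤ b) :
    a * logb 2 a + b * logb 2 b + a ≤ (a + b) * logb 2 (a + b) := by
  have hdouble : logb 2 a + 1 ≤ logb 2 (a + b) := by
    calc logb 2 a + 1 = logb 2 (2 * a) := by
          rw [logb_mul two_ne_zero ha.ne', logb_self_eq_one one_lt_two, add_comm]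
      _ ≤ logb 2 (a + b) := logb_le_logb_of_le one_lt_two (by positivity) (by linarith)
  have hb : logb 2 b ≤ logb 2 (a + b) :=
    logb_le_logb_of_le one_lt_two (ha.trans_le hab) (by linarith)
  linarith [mul_le_mul_of_nonneg_left hdouble ha.le,
    mul_le_mul_of_nonneg_left hb (ha.le.trans hab)]

lemma mul_logb_add_mul_logb_add_min_le {a b : ℝ} (ha : 0 < a) (hb : 0 < b) :
    a * logb 2 a + b * logb 2 b + min a b ≤ (a + b) * logb 2 (a + b) := by
  rcases le_total a b with hab | hba
  · simpa [min_eq_left hab] using mul_logb_add_mul_logb_add_le ha hab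
  · simpa [min_eq_right hba, add_comm, add_right_comm] using mul_logb_add_mul_logb_add_le hb hba

lemma natCast_mul_logb_nonneg (n : ℕ) : 0 ≤ (n : ℝ) * logb 2 n := by
  rcases n.eq_zero_or_pos with rfl | hn
  · simp
  · exact mul_nonneg n.cast_nonneg (logb_nonneg one_lt_two (Nat.one_le_cast.2 hn))

lemma natCast_mul_logb_mono {k n : ℕ} (hkn : k ≤ n) :
    (k : ℝ) * logb 2 k ≤ n * logb 2 n := by
  rcases k.eq_zero_or_pos with rfl | hk
  · simpa using natCast_mul_logb_nonneg n
  · have hk' : (0 : ℝ) < k := Nat.cast_pos.2 hk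
    have hkn' : (k : ℝ) ≤ n := Nat.cast_le.2 hkn
    exact mul_le_mul hkn' (logb_le_logb_of_le one_lt_two hk' hkn')
      (logb_nonneg one_lt_two (Nat.one_le_cast.2 hk)) (hk'.le.trans hkn')
open Finset Real

namespace Finpartition

variable {α : Type*} [DecidableEq α] {s t u : Finset α}

@[simps]
def disjUnion (P : Finpartition s) (Q : Finpartition t) (hst : Disjoint s t) (hu : s ∪ t = u) :
    Finpartition u where
  parts := P.parts ∪ Q.parts
  supIndep := by
    rw [Finset.supIndep_iff_pairwiseDisjoint, coe_union, Set.pairwiseDisjoint_union]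
    exact ⟨P.disjoint, Q.disjoint, fun A hA A' hA' _ => hst.mono (P.le hA) (Q.le hA')⟩
  sup_parts := by rw [sup_union, P.sup_parts, Q.sup_parts, ← hu]; rfl
  bot_notMem := by simp

end Finpartition

section CrossEdges

variable {V : Type*} (G : SimpleGraph V) {U : Finset V}

def CrossEdgesCoveredBy (P : Finpartition U) (B : Finset V) : Prop :=
  ∀ A ∈ P.parts, ∀ A' ∈ P.parts, A ≠ A' → ∀ u ∈ A, ∀ v ∈ A', G.Adj u v → u ∈ B ∨ v ∈ B

variable {G}

lemma crossEdgesCoveredBy_top (B : Finset V) : CrossEdgesCoveredBy G (⊤ : Finpartition U) B := by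
  intro A hA A' hA' hne
  have hsub := Finpartition.parts_top_subset U
  exact absurd ((mem_singleton.1 (hsub hA)).trans (mem_singleton.1 (hsub hA')).symm) hne

lemma CrossEdgesCoveredBy.disjUnion {s t : Finset V} {P : Finpartition s} {Q : Finpartition t}
    {B₁ B₂ C : Finset V} (hst : Disjoint s t) (hu : s ∪ t = U)
    (hP : CrossEdgesCoveredBy G P B₁) (hQ : CrossEdgesCoveredBy G Q B₂)
    (hC : ∀ u ∈ s, ∀ v ∈ t, G.Adj u v → u ∈ C) :
    CrossEdgesCoveredBy G (P.disjUnion Q hst hu) (B₁ ∪ B₂ ∪ C) := by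
  intro A hA A' hA' hne u hu v hv huv
  simp only [Finpartition.disjUnion_parts, mem_union] at hA hA' ⊢
  rcases hA with hA | hA <;> rcases hA' with hA' | hA'
  · have := hP A hA A' hA' hne u hu v hv huv; tauto
  · exact Or.inl (Or.inr (hC u (P.le hA hu) v (Q.le hA' hv) huv))
  · exact Or.inr (Or.inr (hC v (P.le hA' hv) u (Q.le hA hu) huv.symm))
  · have := hQ A hA A' hA' hne u hu v hv huv; tauto

lemma CrossEdgesCoveredBy.avoid {P : Finpartition U} {B : Finset V}
    (hP : CrossEdgesCoveredBy G P B) : CrossEdgesCoveredBy G (P.avoid B) ∅ := by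
  intro A hA A' hA' hne u hu v hv huv
  obtain ⟨D, hD, -, rfl⟩ := P.mem_avoid.1 hA
  obtain ⟨D', hD', -, rfl⟩ := P.mem_avoid.1 hA'
  rw [mem_sdiff] at hu hv
  exact ((hP D hD D' hD' (fun h => hne (h ▸ rfl)) u hu.1 v hv.1 huv).elim hu.2 hv.2).elim

end CrossEdges

section Expanders

variable {V : Type} {G : SimpleGraph V} {α : ℝ} {m : ℕ}

lemma exists_sparse_cut_of_not_isExpander {U : Finset V}
    (h : ¬ IsExpander (G.induce (U : Set V)) α) :
    ∃ S ⊆ U, ∃ C : Finset V, (#C : ℝ) < α * min (#S : ℝ) #(U \ S) ∧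
      ∀ u ∈ S, ∀ v ∈ U \ S, G.Adj u v → u ∈ C := by
  simp only [IsExpander, not_forall, not_le] at h
  obtain ⟨S', -, -, hcut⟩ := h
  let cut := univ.filter fun p : ↥(U : Set V) × ↥(U : Set V) =>
    p.1 ∈ S' ∧ p.2 ∉ S' ∧ (G.induce (U : Set V)).Adj p.1 p.2
  have hS'U : S'.map (Function.Embedding.subtype _) ⊆ U := by
    intro x hx
    obtain ⟨y, -, rfl⟩ := mem_map.1 hx
    exact y.2
  refine ⟨S'.map (Function.Embedding.subtype _), hS'U, cut.image fun p => (p.1 : V), ?_, ?_⟩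
  · have hcard : #cut = cutEdges (G.induce (U : Set V)) S' := by
      unfold cutEdges
      congr! -- the two filters differ only in their `Decidable` instances
    rw [card_map]
    refine (Nat.cast_le.2 (card_image_le.trans hcard.le)).trans_lt (hcut.trans_eq ?_)
    simp [card_sdiff_of_subset hS'U, card_compl]
  · intro u hu v hv huv
    obtain ⟨u', hu', rfl⟩ := mem_map.1 hu
    rw [mem_sdiff] at hv
    refine mem_image.2 ⟨(u', ⟨v, hv.1⟩), ?_, rfl⟩
    simp only [cut, mem_filter, mem_univ, true_and]
    exact ⟨hu', fun hv' => hv.2 (mem_map.2 ⟨_, hv', rfl⟩), huv⟩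

variable (G α m) in
def NoLargeExpander (U : Finset V) : Prop :=
  ∀ W ⊆ U, m ≤ #W → ¬ IsExpander (G.induce (W : Set V)) α

lemma NoLargeExpander.mono {U U' : Finset V} (h : NoLargeExpander G α m U) (hU' : U' ⊆ U) :
    NoLargeExpander G α m U' :=
  fun W hW => h W (hW.trans hU')

theorem exists_finpartition_of_noLargeExpander (hα : 0 ≤ α) (U : Finset V)
    (hU : NoLargeExpander G α m U) :
    ∃ B : Finset V, (#B : ℝ) ≤ α * (#U * logb 2 #U) ∧
      ∃ P : Finpartition U, (∀ A ∈ P.parts, #A < m) ∧ CrossEdgesCoveredBy G P B := by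
  induction U using Finset.strongInduction with
  | H U ih =>
  by_cases hsmall : #U < m
  · refine ⟨∅, by simpa using mul_nonneg hα (natCast_mul_logb_nonneg #U), ⊤,
      fun A hA => ?_, crossEdgesCoveredBy_top ∅⟩
    rwa [mem_singleton.1 (Finpartition.parts_top_subset U hA)]
  obtain ⟨S, hSU, C, hC, hCcut⟩ :=
    exists_sparse_cut_of_not_isExpander (hU U subset_rfl (not_lt.1 hsmall))
  have hpos : 0 < #S ∧ 0 < #(U \ S) := by
    have := pos_of_mul_pos_right ((Nat.cast_nonneg _).trans_lt hC) hα
    simpa only [lt_min_iff, Nat.cast_pos] using this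
  obtain ⟨B₁, hB₁, P₁, hP₁, hP₁cov⟩ := ih S
    (ssubset_of_subset_of_ne hSU fun h => by simp [h] at hpos) (hU.mono hSU)
  obtain ⟨B₂, hB₂, P₂, hP₂, hP₂cov⟩ := ih (U \ S)
    (sdiff_ssubset hSU (card_pos.1 hpos.1)) (hU.mono sdiff_subset)
  refine ⟨B₁ ∪ B₂ ∪ C, ?_, P₁.disjUnion P₂ disjoint_sdiff (union_sdiff_of_subset hSU), ?_,
    hP₁cov.disjUnion _ _ hP₂cov hCcut⟩
  · have hsplit : (#U : ℝ) = #S + #(U \ S) := by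
      rw [← Nat.cast_add, add_comm, card_sdiff_add_card_eq_card hSU]
    have hcard : (#(B₁ ∪ B₂ ∪ C) : ℝ) ≤ #B₁ + #B₂ + #C := by
      exact_mod_cast (card_union_le _ _).trans (Nat.add_le_add_right (card_union_le _ _) _)
    have hpot := mul_le_mul_of_nonneg_left (mul_logb_add_mul_logb_add_min_le
      (Nat.cast_pos.2 hpos.1) (Nat.cast_pos.2 hpos.2)) hα
    rw [hsplit]
    linarith
  · simp only [Finpartition.disjUnion_parts, mem_union]
    rintro A (hA | hA)
    exacts [hP₁ A hA, hP₂ A hA]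

lemma exists_maximal_expander_family (hm : 0 < m) (U : Finset V) :
    ∃ F : Finset (Finset V),
      (∀ W ∈ F, W ⊆ U ∧ m ≤ #W ∧ IsExpander (G.induce (W : Set V)) α) ∧
      (F : Set (Finset V)).PairwiseDisjoint id ∧ NoLargeExpander G α m (U \ F.sup id) := by
  induction U using Finset.strongInduction with
  | H U ih =>
  by_cases hfree : NoLargeExpander G α m U
  · exact ⟨∅, by simp, by simp, by simpa using hfree⟩
  simp only [NoLargeExpander, not_forall, not_not] at hfree
  obtain ⟨W, hWU, hWm, hW⟩ := hfree
  obtain ⟨F, hF, hFdisj, hFfree⟩ := ih (U \ W) (sdiff_ssubset hWU (card_pos.1 (hm.trans_le hWm)))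
  have hWF : ∀ X ∈ F, Disjoint W X := fun X hX => disjoint_sdiff.mono_right (hF X hX).1
  refine ⟨insert W F, ?_, ?_, ?_⟩
  · simp only [mem_insert, forall_eq_or_imp]
    exact ⟨⟨hWU, hWm, hW⟩, fun X hX => ⟨(hF X hX).1.trans sdiff_subset, (hF X hX).2⟩⟩
  · rw [coe_insert]
    exact hFdisj.insert fun X hX _ => hWF X hX
  · rwa [sup_insert, id, ← sdiff_sdiff_left]

lemma exists_fin_family_of_pairwiseDisjoint (F : Finset (Finset V))
    (hF : (F : Set (Finset V)).PairwiseDisjoint id) :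
    ∃ (t : ℕ) (H : Fin t → Finset V), (∀ j j', j ≠ j' → Disjoint (H j) (H j')) ∧
      (∀ j, H j ∈ F) ∧ ∑ j, #(H j) = ∑ W ∈ F, #W := by
  refine ⟨#F, fun j => F.equivFin.symm j, fun j j' hjj' => ?_, fun j => coe_mem _, ?_⟩
  · exact hF (coe_mem _) (coe_mem _) fun h => hjj' (F.equivFin.symm.injective (Subtype.ext h))
  · rw [Equiv.sum_comp F.equivFin.symm fun W => #(W : Finset V), sum_coe_sort F card]

lemma exists_fin_indexed_of_finpartition [Fintype V] {S : Finset V} (Q : Finpartition (univ \ S)) {k : ℕ}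
    (hQ : ∀ A ∈ Q.parts, #A < k) (hQcov : CrossEdgesCoveredBy G Q ∅) :
    ∃ (t : ℕ) (A : Fin t → Finset V),
      (∀ i, ∀ v ∈ A i, v ∉ S) ∧ (∀ v : V, v ∉ S → ∃! i, v ∈ A i) ∧ (∀ i, #(A i) < k) ∧
      (∀ i j, i ≠ j → ∀ u ∈ A i, ∀ v ∈ A j, ¬ G.Adj u v) := by
  let A : Fin #Q.parts → Finset V := fun i => Q.parts.equivFin.symm i
  have hA : ∀ i, A i ∈ Q.parts := fun i => coe_mem _
  have hAinj : A.Injective := fun i j h => Q.parts.equivFin.symm.injective (Subtype.ext h)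
  refine ⟨#Q.parts, A, fun i v hv => (mem_sdiff.1 (Q.le (hA i) hv)).2, fun v hv => ?_,
    fun i => hQ _ (hA i), fun i j hij u hu v hv huv => ?_⟩
  · obtain ⟨D, hD, hvD⟩ := Q.exists_mem (mem_sdiff.2 ⟨mem_univ v, hv⟩)
    refine ⟨Q.parts.equivFin ⟨D, hD⟩, by simpa [A] using hvD, fun j hj => hAinj ?_⟩
    simpa [A] using Q.eq_of_mem_parts (hA j) hD hj hvD
  · simpa using hQcov _ (hA i) _ (hA j) (hAinj.ne hij) u hu v hv huv

end Expanders

/-- **Many disjoint expanding subgraphs or a good partition** (Corollary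
`comb-partitioning`). There is a universal constant `c > 0` such that for every
graph `G` on `n ≥ 2` vertices, `α > 0` and `m, M ≥ 1`, either (i) there are
pairwise disjoint subsets `H_j` of size `≥ m` with total size `≥ M`, each inducing
an `α`-expander; or (ii) there is a set `S` with `|S| ≤ M + 2c·log(n)·α·n` such
that `V ∖ S` can be partitioned into parts of size `< 3m` with no edge of `G`
joining two different parts. -/
theorem expanders_or_partition : ∃ c : ℝ, 0 < c ∧
    ∀ (V : Type) [Fintype V], ∀ (G : SimpleGraph V) (α : ℝ) (m M : ℕ),
      2 ≤ Fintype.card V → 0 < α → 1 ≤ m → 1 ≤ M →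
      (∃ (t : ℕ) (H : Fin t → Finset V),
        (∀ j j', j ≠ j' → Disjoint (H j) (H j')) ∧
        (∀ j, m ≤ (H j).card) ∧
        (M ≤ ∑ j, (H j).card) ∧
        (∀ j, IsExpander (G.induce (↑(H j) : Set V)) α)) ∨
      (∃ S : Finset V,
        ((S.card : ℝ) ≤ (M : ℝ) + 2 * c * Real.log (Fintype.card V) * α * (Fintype.card V)) ∧
        ∃ (t : ℕ) (A : Fin t → Finset V),
          (∀ i, ∀ v ∈ A i, v ∉ S) ∧
          (∀ v : V, v ∉ S → ∃! i, v ∈ A i) ∧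
          (∀ i, (A i).card < 3 * m) ∧
          (∀ i j, i ≠ j → ∀ u ∈ A i, ∀ v ∈ A j, ¬ G.Adj u v)) := by
  -- `c = 1 / (2 log 2)` turns the bound into `M + α n log₂ n`.
  refine ⟨(2 * log 2)⁻¹, by positivity, fun V _ G α m M _ hα hm _ => ?_⟩
  obtain ⟨F, hF, hFdisj, hFfree⟩ := exists_maximal_expander_family (G := G) (α := α) hm univ
  by_cases hFM : M ≤ ∑ W ∈ F, #W
  · obtain ⟨t, H, hHdisj, hHF, hHsum⟩ := exists_fin_family_of_pairwiseDisjoint F hFdisj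
    exact Or.inl ⟨t, H, hHdisj, fun j => (hF _ (hHF j)).2.1, hHsum ▸ hFM,
      fun j => (hF _ (hHF j)).2.2⟩
  obtain ⟨B, hB, P, hPsmall, hPcov⟩ := exists_finpartition_of_noLargeExpander hα.le _ hFfree
  have hsmall : ∀ A ∈ (P.avoid B).parts, #A < 3 * m := by
    intro A hA
    obtain ⟨D, hD, -, rfl⟩ := P.mem_avoid.1 hA
    exact (card_le_card sdiff_subset).trans_lt ((hPsmall D hD).trans_le (by omega))
  refine Or.inr ⟨F.sup id ∪ B, ?_,
    exists_fin_indexed_of_finpartition ((P.avoid B).copy (sdiff_sdiff_left ..)) hsmall hPcov.avoid⟩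
  have hFsup : #(F.sup id) ≤ M := by
    rw [sup_eq_biUnion]
    exact card_biUnion_le.trans (not_le.1 hFM).le
  have hpot := natCast_mul_logb_mono (card_le_univ (univ \ F.sup id))
  calc (#(F.sup id ∪ B) : ℝ) ≤ #(F.sup id) + #B := by exact_mod_cast card_union_le _ _
    _ ≤ M + α * (Fintype.card V * logb 2 (Fintype.card V)) := by
      gcongr
      exact hB.trans (mul_le_mul_of_nonneg_left hpot hα.le)
    _ = _ := by rw [logb]; field_simp
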